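/- Explicit minimal cover: fix integers n ≥ 2 and d′ ≥ 0, and work in dimension n with bit depth d = d′ + n − 2. Let C be the set of all n-dimensional dyadic boxes b for which there exist coordinates i ≠ j and a string s ∈ B^{(n−1)} such that the i-th and j-th components of b are strings of length d′ + |s| ending with the suffix s (i.e. they lie in {0,1}^{d′}·s), and every other component of b equals λ. Then the union of the boxes of C covers the universal box ⟨λ,…,λ⟩, and for every box c₀ ∈ C the set C \ {c₀} does not cover it. -/
import Mathlib


/-- An `n`-dimensional dyadic box: each component is a binary string (a dyadic
interval), the empty string denoting the whole domain `{0,1}^d`. -/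
abbrev DyadicBox (n : ℕ) := Fin n → List Bool

namespace DyadicBox

/-- `b'` contains `b` iff every component of `b'` is a prefix of the
corresponding component of `b`. -/
def Contains {n : ℕ} (b' b : DyadicBox n) : Prop := ∀ i, b' i <+: b i

/-- A point at bit depth `d`: every component has length exactly `d`. -/
def IsPoint {n : ℕ} (d : ℕ) (p : DyadicBox n) : Prop := ∀ i, (p i).length = d

/-- A set of boxes `A` covers a box `b` at bit depth `d`: every point lying in
`b` lies in some box of `A`. -/
def Covers {n : ℕ} (d : ℕ) (A : Set (DyadicBox n)) (b : DyadicBox n) : Prop :=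
  ∀ p : DyadicBox n, IsPoint d p → Contains b p → ∃ a ∈ A, Contains a p

/-- `w` is the geometric resolvent of `w₁` and `w₂` on coordinate `ℓ`:
the `ℓ`-th components are `x0` and `x1` and become `x`, and every other
component of `w` is the longer of the two (prefix-comparable) components. -/
def IsResolvent {n : ℕ} (w₁ w₂ : DyadicBox n) (ℓ : Fin n) (w : DyadicBox n) : Prop :=
  (∃ x : List Bool, w₁ ℓ = x ++ [false] ∧ w₂ ℓ = x ++ [true] ∧ w ℓ = x) ∧
  ∀ j : Fin n, j ≠ ℓ →
    (w₁ j <+: w₂ j ∧ w j = w₂ j) ∨ (w₂ j <+: w₁ j ∧ w j = w₁ j)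

/-- A (tagged) geometric resolution derivation from `A`: an entry tagged `true`
is the geometric resolvent of two earlier entries; an entry tagged `false` is
an axiom, i.e. belongs to `A`. -/
def IsDerivation {n : ℕ} (A : Set (DyadicBox n)) (L : List (Bool × DyadicBox n)) : Prop :=
  ∀ k : Fin L.length,
    if (L.get k).1 then
      ∃ i j : Fin L.length, (i : ℕ) < (k : ℕ) ∧ (j : ℕ) < (k : ℕ) ∧
        ∃ ℓ : Fin n, IsResolvent ((L.get i).2) ((L.get j).2) ℓ ((L.get k).2)
    else (L.get k).2 ∈ A

/-- The number of resolution steps of a derivation. -/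
def steps {n : ℕ} (L : List (Bool × DyadicBox n)) : ℕ := (L.filter (·.1)).length

/-- `z` is derivable from `A` by geometric resolutions: it occurs in some
geometric resolution derivation from `A`. -/
def Derivable {n : ℕ} (A : Set (DyadicBox n)) (z : DyadicBox n) : Prop :=
  ∃ L : List (Bool × DyadicBox n), IsDerivation A L ∧ z ∈ L.map (·.2)

end DyadicBox

/-- The set `B⁽ᵐ⁾` of binary strings `{1^{k−1}0 : 1 ≤ k ≤ m−1} ∪ {1^{m−1}}`
(with `true` playing the role of the bit `1`). -/
def BSet (m : ℕ) : Set (List Bool) :=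
  {s | (∃ k : ℕ, 1 ≤ k ∧ k ≤ m - 1 ∧ s = List.replicate (k - 1) true ++ [false]) ∨
       s = List.replicate (m - 1) true}

private def ctL : List Bool → ℕ
  | [] => 0
  | b :: t => if b then ctL t + 1 else 0

private lemma ctL_cons (b : Bool) (t : List Bool) :
    ctL (b :: t) = if b then ctL t + 1 else 0 := rfl

private lemma ctL_rep (c : ℕ) : ctL (List.replicate c true) = c := by
  induction c with
  | zero => rfl
  | succ c ih => simp [List.replicate_succ, ctL_cons, ih]

private lemma ctL_rep_false (c : ℕ) (r : List Bool) :
    ctL (List.replicate c true ++ false :: r) = c := by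
  induction c with
  | zero => rfl
  | succ c ih => simp [List.replicate_succ, ctL_cons, ih]

private lemma ctL_prefix_lt {v : List Bool} (h : ctL v < v.length) :
    List.replicate (ctL v) true ++ [false] <+: v := by
  induction v with
  | nil => simp at h
  | cons b t ih =>
    cases b with
    | false => exact ⟨t, by simp [ctL_cons]⟩
    | true =>
      have h' : ctL t < t.length := by simpa [ctL_cons] using h
      obtain ⟨r, hr⟩ := ih h'
      refine ⟨r, ?_⟩
      have hc : ctL (true :: t) = ctL t + 1 := rfl
      rw [hc, List.replicate_succ, List.cons_append, List.cons_append, hr]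

private lemma eq_rep_of_len_le {v : List Bool} (h : v.length ≤ ctL v) :
    v = List.replicate v.length true := by
  induction v with
  | nil => rfl
  | cons b t ih =>
    cases b with
    | false => simp [ctL_cons] at h
    | true =>
      have h' : t.length ≤ ctL t := by simpa [ctL_cons] using h
      rw [List.length_cons, List.replicate_succ]
      exact congrArg _ (ih h')

private def sO (M c : ℕ) : List Bool :=
  if c = M then List.replicate M true else List.replicate c true ++ [false]

private lemma sO_prefix {M : ℕ} {v : List Bool} (h : v.length = M) :
    sO M (min (ctL v) M) <+: v := by
  rcases lt_or_ge (ctL v) M with hlt | hge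
  · have hmin : min (ctL v) M = ctL v := min_eq_left hlt.le
    rw [hmin, sO, if_neg hlt.ne]
    exact ctL_prefix_lt (h ▸ hlt)
  · have hv : v = List.replicate M true := by
      have := eq_rep_of_len_le (h ▸ hge)
      rwa [h] at this
    have hmin : min (ctL v) M = M := min_eq_right hge
    rw [hmin, sO, if_pos rfl, hv]

private lemma sO_mem_BSet {m c : ℕ} (hc : c ≤ m - 1) : sO (m - 1) c ∈ BSet m := by
  by_cases hcm : c = m - 1
  · right; rw [sO, if_pos hcm]
  · left
    exact ⟨c + 1, by omega, by omega, by rw [sO, if_neg hcm]; simp⟩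

private lemma bset_ct {m : ℕ} {s : List Bool} (hs : s ∈ BSet m) :
    ctL s ≤ m - 1 ∧ s.length ≤ m - 1 ∧ sO (m - 1) (ctL s) = s := by
  rcases hs with ⟨k, hk1, hk2, rfl⟩ | rfl
  · have hct : ctL (List.replicate (k - 1) true ++ [false]) = k - 1 :=
      ctL_rep_false (k - 1) []
    refine ⟨by omega, by simp; omega, ?_⟩
    rw [hct, sO, if_neg (by omega)]
  · rw [ctL_rep]
    exact ⟨le_refl _, by simp, by rw [sO, if_pos rfl]⟩

private lemma bset_prefix_ct {m : ℕ} {s v : List Bool} (hs : s ∈ BSet m)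
    (hpre : s <+: v) (hv : v.length = m - 1) : ctL v = ctL s := by
  obtain ⟨r, hr⟩ := hpre
  rcases hs with ⟨k, hk1, hk2, rfl⟩ | rfl
  · rw [← hr, List.append_assoc]
    simp only [List.singleton_append]
    rw [ctL_rep_false, ctL_rep_false (r := [])]
  · have hr0 : r = [] := by
      have := congrArg List.length hr
      simp at this
      simp [hv] at this
      exact this
    rw [← hr, hr0, List.append_nil]

private def ExtL (M : ℕ) (s : List Bool) : List Bool :=
  s ++ List.replicate (M - s.length) false

private lemma ext_len {M c : ℕ} (hc : c ≤ M) : (ExtL M (sO M c)).length = M := by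
  by_cases hcm : c = M
  · simp [ExtL, sO, hcm]
  · simp [ExtL, sO, hcm]; omega

private lemma ext_ct {M c : ℕ} (hc : c ≤ M) : ctL (ExtL M (sO M c)) = c := by
  by_cases hcm : c = M
  · subst hcm
    simp [ExtL, sO, ctL_rep]
  · rw [ExtL, sO, if_neg hcm]
    rw [List.append_assoc]
    simp only [List.singleton_append]
    exact ctL_rep_false _ _

private lemma sO_prefix_ext {M c : ℕ} : sO M c <+: ExtL M (sO M c) :=
  ⟨_, rfl⟩

private lemma prefix_split {u x s y : List Bool} (h : u ++ s <+: x ++ y)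
    (hlen : u.length = x.length) : u = x ∧ s <+: y := by
  obtain ⟨t, ht⟩ := h
  rw [List.append_assoc] at ht
  have h1 : u = x := by
    have := congrArg (List.take u.length) ht
    rwa [List.take_left, hlen, List.take_left] at this
  subst h1
  exact ⟨rfl, t, List.append_cancel_left ht⟩

private lemma prefix_append_left {x s y : List Bool} (h : s <+: y) : x ++ s <+: x ++ y := by
  obtain ⟨t, ht⟩ := h
  exact ⟨t, by rw [List.append_assoc, ht]⟩

/-- Explicit minimal cover: in dimension `n ≥ 2` and bit depth `d = d′ + n − 2`,
the set `C` of all boxes having, for some pair of distinct coordinates `i ≠ j`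
and some `s ∈ B⁽ⁿ⁻¹⁾`, components at `i` and `j` lying in `{0,1}^{d′}·s` and
all other components equal to `λ`, covers the universal box, and no proper
subset of `C` does. -/
theorem explicit_minimal_cover (n d' : ℕ) (hn : 2 ≤ n)
    (C : Set (DyadicBox n))
    (hC : ∀ b : DyadicBox n, b ∈ C ↔
      ∃ i j : Fin n, i ≠ j ∧ ∃ s ∈ BSet (n - 1), ∃ u w : List Bool,
        u.length = d' ∧ w.length = d' ∧
        b i = u ++ s ∧ b j = w ++ s ∧
        ∀ k : Fin n, k ≠ i → k ≠ j → b k = []) :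
    DyadicBox.Covers (d' + n - 2) C (fun _ => []) ∧
    ∀ c₀ ∈ C, ¬ DyadicBox.Covers (d' + n - 2) (C \ {c₀}) (fun _ => []) := by
  set M := n - 2 with hM
  have hM1 : (n - 1) - 1 = M := by omega
  constructor
  · -- covering
    intro p hp _
    set v : Fin n → List Bool := fun l => (p l).drop d' with hv
    have hvlen : ∀ l, (v l).length = M := by
      intro l; rw [hv]; simp [hp l]; omega
    have hcard : Fintype.card (Fin (n - 1)) < Fintype.card (Fin n) := by
      simp; omega
    obtain ⟨i, j, hij, hF⟩ := Fintype.exists_ne_map_eq_of_card_lt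
      (fun l : Fin n => (⟨min (ctL (v l)) M, by omega⟩ : Fin (n - 1))) hcard
    have hFij : min (ctL (v i)) M = min (ctL (v j)) M := congrArg Fin.val hF
    set c := min (ctL (v i)) M with hc
    set s := sO M c with hs
    set b : DyadicBox n := fun l =>
      if l = i then (p i).take d' ++ s else if l = j then (p j).take d' ++ s else []
      with hb
    have htake : ∀ l, ((p l).take d').length = d' := by
      intro l; simp [hp l]; omega
    refine ⟨b, ?_, ?_⟩
    · rw [hC]
      refine ⟨i, j, hij, s, ?_, (p i).take d', (p j).take d', htake i, htake j, ?_, ?_, ?_⟩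
      · have hc1 : c ≤ (n - 1) - 1 := by omega
        have hmem := sO_mem_BSet (m := n - 1) hc1
        rwa [hM1] at hmem
      · rw [hb]; simp
      · rw [hb]; simp [Ne.symm hij]
      · intro k hki hkj; rw [hb]; simp [hki, hkj]
    · intro l
      by_cases hli : l = i
      · subst hli
        have hbl : b l = List.take d' (p l) ++ s := by simp [hb]
        have hpre : s <+: v l := by rw [hs, hc]; exact sO_prefix (hvlen l)
        obtain ⟨t, ht⟩ := hpre
        rw [hbl]
        exact ⟨t, by rw [List.append_assoc, ht]; exact List.take_append_drop _ _⟩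
      · by_cases hlj : l = j
        · subst hlj
          have hbl : b l = List.take d' (p l) ++ s := by simp [hb, hli]
          have hpre : s <+: v l := by rw [hs, hFij]; exact sO_prefix (hvlen l)
          obtain ⟨t, ht⟩ := hpre
          rw [hbl]
          exact ⟨t, by rw [List.append_assoc, ht]; exact List.take_append_drop _ _⟩
        · have hbl : b l = [] := by simp [hb, hli, hlj]
          rw [hbl]
          exact List.nil_prefix
  · -- minimality
    rintro c₀ hc₀ hcov
    obtain ⟨i, j, hij, s, hsB, u, w, hu, hw, hbi, hbj, hrest⟩ := (hC c₀).1 hc₀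
    obtain ⟨hct_le, hslen, hsOs⟩ := bset_ct hsB
    rw [hM1] at hct_le hsOs
    set k₀ := ctL s with hk₀
    set T : Finset (Fin n) := {i, j}ᶜ with hT
    have hmemT : ∀ l, l ∈ T ↔ (l ≠ i ∧ l ≠ j) := by
      intro l; rw [hT]; simp [not_or]
    set S : Finset ℕ := (Finset.range (n - 1)).erase k₀ with hS
    have hcT : T.card = n - 2 := by
      rw [hT, Finset.card_compl, Finset.card_pair hij]; simp
    have hcS : S.card = n - 2 := by
      rw [hS, Finset.card_erase_of_mem (Finset.mem_range.2 (by omega)), Finset.card_range]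
      omega
    set e := Finset.equivOfCardEq (hcT.trans hcS.symm) with he
    set g : Fin n → ℕ := fun l => if h : l ∈ T then (e ⟨l, h⟩ : ℕ) else k₀ with hg
    have hgS : ∀ l (h : l ∈ T), g l ∈ S := by
      intro l h; rw [hg]; dsimp only; rw [dif_pos h]; exact (e ⟨l, h⟩).2
    have hgk : ∀ l, l ∉ T → g l = k₀ := by
      intro l h; rw [hg]; dsimp only; rw [dif_neg h]
    have hgle : ∀ l, g l ≤ M := by
      intro l
      by_cases h : l ∈ T
      · have h2 := hgS l h
        rw [hS] at h2
        have h3 := Finset.mem_of_mem_erase h2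
        rw [Finset.mem_range] at h3; omega
      · rw [hgk l h]; exact hct_le
    have hginj : ∀ l₁ l₂, l₁ ∈ T → l₂ ∈ T → g l₁ = g l₂ → l₁ = l₂ := by
      intro l₁ l₂ h₁ h₂ hgl
      rw [hg] at hgl; dsimp only at hgl; rw [dif_pos h₁, dif_pos h₂] at hgl
      have h3 := e.injective (Subtype.ext hgl)
      exact congrArg Subtype.val h3
    set pad : Fin n → List Bool := fun l =>
      if l = i then u else if l = j then w else List.replicate d' false with hpad
    have hpadlen : ∀ l, (pad l).length = d' := by
      intro l; rw [hpad]; dsimp only; split_ifs <;> simp [hu, hw]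
    have hpadi : pad i = u := by rw [hpad]; simp
    have hpadj : pad j = w := by rw [hpad]; simp [Ne.symm hij]
    set p : DyadicBox n := fun l => pad l ++ ExtL M (sO M (g l)) with hp
    have hplen : DyadicBox.IsPoint (d' + n - 2) p := by
      intro l; rw [hp]; dsimp only
      rw [List.length_append, hpadlen l, ext_len (hgle l)]; omega
    have hiT : i ∉ T := by rw [hmemT]; simp
    have hjT : j ∉ T := by rw [hmemT]; simp
    have hgi : g i = k₀ := hgk i hiT
    have hgj : g j = k₀ := hgk j hjT
    have hcont : DyadicBox.Contains c₀ p := by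
      intro l
      by_cases hli : l = i
      · subst hli
        rw [hbi, hp]; dsimp only
        rw [hpadi]
        refine prefix_append_left ?_
        rw [hgi, hsOs]
        exact ⟨_, rfl⟩
      · by_cases hlj : l = j
        · subst hlj
          rw [hbj, hp]; dsimp only
          rw [hpadj]
          refine prefix_append_left ?_
          rw [hgj, hsOs]
          exact ⟨_, rfl⟩
        · rw [hrest l hli hlj]
          exact List.nil_prefix
    obtain ⟨a, haC, hap⟩ := hcov p hplen (fun l => List.nil_prefix)
    obtain ⟨haC', hane⟩ := haC
    obtain ⟨i', j', hij', s', hs'B, u', w', hu', hw', hai, haj, hrest'⟩ := (hC a).1 haC'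
    obtain ⟨hct_le2, hslen2, hsOs2⟩ := bset_ct hs'B
    rw [hM1] at hct_le2 hsOs2
    have key : ∀ l u₀, a l = u₀ ++ s' → u₀.length = d' → u₀ = pad l ∧ g l = ctL s' := by
      intro l u₀ hal hlen
      have h1 := hap l
      rw [hal, hp] at h1; dsimp only at h1
      obtain ⟨hpad_eq, hpre⟩ := prefix_split h1 (by rw [hlen, hpadlen l])
      refine ⟨hpad_eq, ?_⟩
      have hlenv : (ExtL M (sO M (g l))).length = (n - 1) - 1 := by
        rw [ext_len (hgle l), hM1]
      have h2 := bset_prefix_ct hs'B hpre hlenv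
      rw [ext_ct (hgle l)] at h2
      exact h2
    obtain ⟨hui', hgi'⟩ := key i' u' hai hu'
    obtain ⟨hwj', hgj'⟩ := key j' w' haj hw'
    have hgg : g i' = g j' := by rw [hgi', hgj']
    have hnotT : ∀ l₁ l₂ : Fin n, l₁ ≠ l₂ → g l₁ = g l₂ → l₁ ∉ T := by
      intro l₁ l₂ hne hgl h1
      by_cases h2 : l₂ ∈ T
      · exact hne (hginj _ _ h1 h2 hgl)
      · have h3 := hgS l₁ h1
        rw [hgk l₂ h2] at hgl
        rw [hgl, hS] at h3
        exact Finset.notMem_erase _ _ h3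
    have hi'T : i' ∉ T := hnotT i' j' hij' hgg
    have hj'T : j' ∉ T := hnotT j' i' hij'.symm hgg.symm
    have hi'm : i' = i ∨ i' = j := by
      by_contra hcon; push_neg at hcon; exact hi'T ((hmemT i').2 hcon)
    have hj'm : j' = i ∨ j' = j := by
      by_contra hcon; push_neg at hcon; exact hj'T ((hmemT j').2 hcon)
    have hcts' : ctL s' = k₀ := by
      rw [← hgi', hgk i' hi'T]
    have hss : s' = s := by rw [← hsOs2, hcts', hk₀, hsOs]
    have hfun : a = c₀ := by
      funext l
      by_cases hli : l = i
      · subst hli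
        rcases hi'm with h1 | h1
        · subst h1
          rw [hai, hui', hpadi, hss, hbi]
        · -- i' = j, so j' = i
          have h2 : j' = l := by
            rcases hj'm with h2 | h2
            · exact h2
            · exact absurd (h1.trans h2.symm) hij'
          rw [← h2, haj, hwj', h2, hpadi, hss, hbi]
      · by_cases hlj : l = j
        · subst hlj
          rcases hj'm with h1 | h1
          · -- j' = i, so i' = l
            have h2 : i' = l := by
              rcases hi'm with h2 | h2
              · exact absurd (h2.trans h1.symm) hij'
              · exact h2
            rw [← h2, hai, hui', h2, hpadj, hss, hbj]
          · subst h1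
            rw [haj, hwj', hpadj, hss, hbj]
        · have h1 : l ≠ i' := by
            rcases hi'm with h | h <;> rw [h] <;> assumption
          have h2 : l ≠ j' := by
            rcases hj'm with h | h <;> rw [h] <;> assumption
          rw [hrest' l h1 h2, hrest l hli hlj]
    exact hane (Set.mem_singleton_iff.2 hfun)
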